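/- Let T be a measure-preserving automorphism of a probability space (X, μ), and let f ∈ L^∞(X, μ) be a T-invariant function with f ≥ 0 and ∫_X f dμ = 1. Let μ_f be the measure with dμ_f/dμ = f. Then the Kolmogorov–Sinai entropy satisfies h_{μ_f}(T) ≤ ‖f‖_∞ · h_μ(T). -/

import Mathlib

open MeasureTheory Filter Set
open scoped ENNReal

noncomputable def partEntropy {X : Type*} [MeasurableSpace X] (μ : Measure X)
    {ι : Type*} [Fintype ι] (P : X → ι) : ℝ :=
  ∑ i : ι, Real.negMulLog (μ (P ⁻¹' {i})).toReal

noncomputable def dynJoin {X : Type*} (T : X → X) {ι : Type*} (P : X → ι) (n : ℕ) :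
    X → Fin n → ι := fun x i => P (T^[(i : ℕ)] x)

noncomputable def entropyRel {X : Type*} [MeasurableSpace X] (μ : Measure X) (T : X → X)
    {ι : Type*} [Fintype ι] (P : X → ι) : ℝ :=
  ⨅ n : ℕ, partEntropy μ (dynJoin T P (n + 1)) / (n + 1)

noncomputable def ksEntropy {X : Type*} [MeasurableSpace X] (μ : Measure X) (T : X → X) : ℝ≥0∞ :=
  ⨆ (k : ℕ) (P : X → Fin k) (_ : Measurable P), ENNReal.ofReal (entropyRel μ T P)

open scoped NNReal

/-! Since `f ≤ ‖f‖_∞` almost everywhere, `μ_f ≤ ‖f‖_∞ • μ`. For probability measures with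
`ν ≤ c • μ`, the elementary bound `-t log t ≤ c (-s log s) + (s - t)` for `0 ≤ t ≤ c s`, `s ≤ 1`,
summed over the cells of a finite partition (the correction terms add up to `1 - 1 = 0`), gives
`H_ν(P) ≤ c H_μ(P)`. Applied to the dynamical refinements of `P` this passes to the entropy of `T`
relative to `P`, and then to the supremum over `P`. -/

lemma Real.negMulLog_le_mul_negMulLog_add_sub {c t s : ℝ} (hc : 0 ≤ c) (ht : 0 ≤ t)
    (hs : 0 ≤ s) (hs1 : s ≤ 1) (hts : t ≤ c * s) :
    Real.negMulLog t ≤ c * Real.negMulLog s + (s - t) := by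
  -- `-t log t = t log (s / t) - t log s`, with `t log (s / t) ≤ s - t` and `-t log s ≤ c (-s log s)`
  rcases ht.eq_or_lt with rfl | ht
  · simpa using add_nonneg (mul_nonneg hc (Real.negMulLog_nonneg hs hs1)) hs
  have hs : 0 < s := pos_of_mul_pos_right (ht.trans_le hts) hc
  have hgibbs : t * Real.log (s / t) ≤ s - t := by
    have := mul_le_mul_of_nonneg_left (Real.log_le_sub_one_of_pos (div_pos hs ht)) ht.le
    rwa [mul_sub, mul_div_cancel₀ _ ht.ne', mul_one] at this
  have hlog : -(t * Real.log s) ≤ c * Real.negMulLog s := by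
    have := mul_le_mul_of_nonneg_right hts (neg_nonneg.mpr (Real.log_nonpos hs.le hs1))
    rw [Real.negMulLog]
    linarith
  rw [Real.log_div hs.ne' ht.ne'] at hgibbs
  rw [Real.negMulLog]
  linarith

section

variable {X : Type*} [MeasurableSpace X]

lemma partEntropy_nonneg (μ : Measure X) [IsZeroOrProbabilityMeasure μ] {ι : Type*} [Fintype ι]
    (P : X → ι) : 0 ≤ partEntropy μ P :=
  Finset.sum_nonneg fun _ _ => Real.negMulLog_nonneg ENNReal.toReal_nonneg measureReal_le_one

lemma sum_measureReal_preimage_singleton_eq_one (μ : Measure X) [IsProbabilityMeasure μ]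
    {ι : Type*} [Fintype ι] {P : X → ι} (hP : ∀ i, MeasurableSet (P ⁻¹' {i})) :
    ∑ i, μ.real (P ⁻¹' {i}) = 1 := by
  rw [sum_measureReal_preimage_singleton _ fun i _ => hP i]
  simp

lemma partEntropy_le_mul_of_le_smul {μ ν : Measure X} [IsProbabilityMeasure μ]
    [IsProbabilityMeasure ν] {c : ℝ≥0} (hνμ : ν ≤ (c : ℝ≥0∞) • μ) {ι : Type*} [Fintype ι]
    {P : X → ι} (hP : ∀ i, MeasurableSet (P ⁻¹' {i})) :
    partEntropy ν P ≤ c * partEntropy μ P := by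
  have hcell (i : ι) : ν.real (P ⁻¹' {i}) ≤ c * μ.real (P ⁻¹' {i}) := by
    have := hνμ (P ⁻¹' {i})
    rw [Measure.smul_apply, smul_eq_mul] at this
    simpa [measureReal_def, ENNReal.toReal_mul] using ENNReal.toReal_mono (by finiteness) this
  calc partEntropy ν P
      ≤ ∑ i, (c * Real.negMulLog (μ.real (P ⁻¹' {i})) +
          (μ.real (P ⁻¹' {i}) - ν.real (P ⁻¹' {i}))) :=
        Finset.sum_le_sum fun i _ => Real.negMulLog_le_mul_negMulLog_add_sub c.coe_nonneg
          measureReal_nonneg measureReal_nonneg measureReal_le_one (hcell i)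
    _ = c * partEntropy μ P := by
        rw [Finset.sum_add_distrib, Finset.sum_sub_distrib,
          sum_measureReal_preimage_singleton_eq_one μ hP,
          sum_measureReal_preimage_singleton_eq_one ν hP, ← Finset.mul_sum, sub_self, add_zero]
        rfl

end

lemma measurable_dynJoin {X ι : Type*} [MeasurableSpace X] [MeasurableSpace ι] {T : X → X}
    (hT : Measurable T) {P : X → ι} (hP : Measurable P) (n : ℕ) : Measurable (dynJoin T P n) :=
  measurable_pi_lambda _ fun i => hP.comp (hT.iterate i)

section

variable {X : Type*} [MeasurableSpace X] {μ ν : Measure X} [IsProbabilityMeasure μ]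
  [IsProbabilityMeasure ν] {c : ℝ≥0} {T : X → X}

lemma entropyRel_le_mul_of_le_smul (hνμ : ν ≤ (c : ℝ≥0∞) • μ) (hT : Measurable T)
    {ι : Type*} [Fintype ι] [MeasurableSpace ι] [MeasurableSingletonClass ι] {P : X → ι}
    (hP : Measurable P) : entropyRel ν T P ≤ c * entropyRel μ T P := by
  rw [entropyRel, entropyRel, Real.mul_iInf_of_nonneg c.coe_nonneg]
  refine ciInf_mono ⟨0, ?_⟩ fun n => ?_
  · rintro _ ⟨n, rfl⟩
    have := partEntropy_nonneg ν (dynJoin T P (n + 1))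
    positivity
  · rw [← mul_div_assoc]
    gcongr
    exact partEntropy_le_mul_of_le_smul hνμ
      fun j => measurable_dynJoin hT hP _ (measurableSet_singleton j)

lemma ksEntropy_le_mul_of_le_smul (hνμ : ν ≤ (c : ℝ≥0∞) • μ) (hT : Measurable T) :
    ksEntropy ν T ≤ c * ksEntropy μ T := by
  refine iSup₂_le fun k P => iSup_le fun hP => ?_
  calc ENNReal.ofReal (entropyRel ν T P)
      ≤ ENNReal.ofReal (c * entropyRel μ T P) :=
        ENNReal.ofReal_le_ofReal (entropyRel_le_mul_of_le_smul hνμ hT hP)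
    _ = c * ENNReal.ofReal (entropyRel μ T P) := by
        rw [ENNReal.ofReal_mul c.coe_nonneg, ENNReal.ofReal_coe_nnreal]
    _ ≤ c * ksEntropy μ T := by
        gcongr
        exact le_iSup₂_of_le k P (le_iSup_of_le hP le_rfl)

end

lemma withDensity_ofReal_le_eLpNorm_top_smul {X : Type*} [MeasurableSpace X] (μ : Measure X)
    (f : X → ℝ) : μ.withDensity (fun x => ENNReal.ofReal (f x)) ≤ eLpNorm f ⊤ μ • μ := by
  rw [← withDensity_const, eLpNorm_exponent_top]
  refine withDensity_mono ?_
  filter_upwards [ae_le_eLpNormEssSup (f := f) (μ := μ)] with x hx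
  exact (Real.ofReal_le_enorm _).trans hx

lemma isProbabilityMeasure_withDensity_ofReal {X : Type*} [MeasurableSpace X] {μ : Measure X}
    {f : X → ℝ} (hf : Integrable f μ) (hf0 : 0 ≤ᵐ[μ] f) (hint : ∫ x, f x ∂μ = 1) :
    IsProbabilityMeasure (μ.withDensity (fun x => ENNReal.ofReal (f x))) := by
  constructor
  rw [withDensity_apply _ MeasurableSet.univ, setLIntegral_univ,
    ← ofReal_integral_eq_lintegral_ofReal hf hf0, hint, ENNReal.ofReal_one]

theorem entropy_withDensity_le_general {X : Type*} [MeasurableSpace X] (μ : Measure X)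
    [IsProbabilityMeasure μ] (T : X ≃ᵐ X)
    (f : X → ℝ) (hf : MemLp f ⊤ μ) (hf0 : ∀ x, 0 ≤ f x)
    (hint : ∫ x, f x ∂μ = 1) :
    ksEntropy (μ.withDensity (fun x => ENNReal.ofReal (f x))) (⇑T)
      ≤ eLpNorm f ⊤ μ * ksEntropy μ (⇑T) := by
  have := isProbabilityMeasure_withDensity_ofReal (hf.integrable le_top)
    (ae_of_all _ hf0) hint
  lift eLpNorm f ⊤ μ to ℝ≥0 using hf.eLpNorm_lt_top.ne with C hC
  exact ksEntropy_le_mul_of_le_smul (hC ▸ withDensity_ofReal_le_eLpNorm_top_smul μ f)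
    T.measurable

/-- Lemma 3a: if `f` is a T-invariant density with integral 1, then
`h_{μ_f}(T) ≤ ‖f‖_∞ · h_μ(T)`. -/
theorem entropy_withDensity_le {X : Type*} [MeasurableSpace X] (μ : Measure X)
    [IsProbabilityMeasure μ] (T : X ≃ᵐ X) (hT : MeasurePreserving T μ μ)
    (f : X → ℝ) (hf : MemLp f ⊤ μ) (hf0 : ∀ x, 0 ≤ f x) (hfT : f ∘ T = f)
    (hint : ∫ x, f x ∂μ = 1) :
    ksEntropy (μ.withDensity (fun x => ENNReal.ofReal (f x))) (⇑T)
      ≤ eLpNorm f ⊤ μ * ksEntropy μ (⇑T) :=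
  entropy_withDensity_le_general μ T f hf hf0 hint
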